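/- arXiv:math/0612222 — 5 statements merged into one kernel-verified Lean document; each statement's English description precedes it below -/
import Mathlib

section
/- If a, b, c are elements of a free group satisfying a²b²c² = 1, then a, b, and c pairwise commute. -/
set_option linter.unusedSectionVars false

namespace VaughtAux

variable {β : Type u} [LinearOrder β]

abbrev V (β : Type u) := β →₀ ZMod 2

noncomputable def T (i : β) : V β →ₗ[ZMod 2] ZMod 2 :=
  Finsupp.lsum (ZMod 2) (fun j => if i < j then LinearMap.id else 0)

noncomputable def B : V β →ₗ[ZMod 2] V β →ₗ[ZMod 2] ZMod 2 :=
  Finsupp.lsum (ZMod 2) (fun i => LinearMap.toSpanSingleton (ZMod 2) _ (T i))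

theorem B_single_single {i j : β} :
    B (Finsupp.single i 1) (Finsupp.single j 1) = if i < j then 1 else 0 := by
  rw [B, Finsupp.lsum_single, LinearMap.toSpanSingleton_apply, one_smul, T,
    Finsupp.lsum_single]
  split <;> simp

@[ext]
structure Ext (β : Type u) [LinearOrder β] where
  v : V β
  s : ZMod 2

noncomputable instance : Group (Ext β) where
  mul x y := ⟨x.v + y.v, x.s + y.s + B x.v y.v⟩
  one := ⟨0, 0⟩
  inv x := ⟨-x.v, -x.s + B x.v x.v⟩
  mul_assoc x y z := by
    ext : 1
    · exact add_assoc _ _ _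
    · show x.s + y.s + B x.v y.v + z.s + B (x.v + y.v) z.v
        = x.s + (y.s + z.s + B y.v z.v) + B x.v (y.v + z.v)
      simp only [map_add, LinearMap.add_apply]
      ring
  one_mul x := by
    ext : 1
    · exact zero_add _
    · show 0 + x.s + B 0 x.v = x.s
      simp
  mul_one x := by
    ext : 1
    · exact add_zero _
    · show x.s + 0 + B x.v 0 = x.s
      simp
  inv_mul_cancel x := by
    ext : 1
    · exact neg_add_cancel _
    · show -x.s + B x.v x.v + x.s + B (-x.v) x.v = 0
      simp only [map_neg, LinearMap.neg_apply]
      ring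

theorem ext_mul (x y : Ext β) : x * y = ⟨x.v + y.v, x.s + y.s + B x.v y.v⟩ := rfl

theorem ext_one : (1 : Ext β) = ⟨0, 0⟩ := rfl

theorem V_add_self (v : V β) : v + v = 0 := by
  rw [← two_smul (ZMod 2) v, show (2 : ZMod 2) = 0 by decide, zero_smul]

theorem ext_sq (x : Ext β) : x ^ 2 = ⟨0, B x.v x.v⟩ := by
  rw [sq, ext_mul]
  ext : 1
  · exact V_add_self _
  · show x.s + x.s + B x.v x.v = B x.v x.v
    rw [CharTwo.add_self_eq_zero, zero_add]

/-- the homomorphism into the central extension -/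
noncomputable def φ : FreeGroup β →* Ext β :=
  FreeGroup.lift (fun i => ⟨Finsupp.single i 1, 0⟩)

/-- projection to the (multiplicative) mod-2 abelianization -/
noncomputable def p : Ext β →* Multiplicative (V β) where
  toFun x := Multiplicative.ofAdd x.v
  map_one' := rfl
  map_mul' x y := by
    show Multiplicative.ofAdd (x.v + y.v) = _
    rfl

/-- ℤ-abelianization -/
noncomputable def zab : FreeGroup β →* Multiplicative (β →₀ ℤ) :=
  FreeGroup.lift (fun i => Multiplicative.ofAdd (Finsupp.single i 1))

noncomputable def r2 : (β →₀ ℤ) →+ V β :=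
  Finsupp.mapRange.addMonoidHom (Int.castAddHom (ZMod 2))

theorem compat : (AddMonoidHom.toMultiplicative (r2 (β := β))).comp zab = p.comp φ := by
  apply FreeGroup.ext_hom
  intro i
  simp only [MonoidHom.comp_apply, zab, φ, FreeGroup.lift_apply_of]
  show Multiplicative.ofAdd (r2 (Finsupp.single i 1))
      = Multiplicative.ofAdd (Finsupp.single i (1 : ZMod 2))
  rw [r2]
  simp [Finsupp.mapRange_single]

theorem compat' (x : FreeGroup β) : r2 (Multiplicative.toAdd (zab x)) = (φ x).v := by
  have := congrArg (fun f => (f : FreeGroup β →* Multiplicative (V β)) x) compat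
  simpa [p] using this


theorem key {β : Type u} [LinearOrder β] (a b c : FreeGroup β)
    (htop : Subgroup.closure {a, b, c} = ⊤)
    (h : a ^ 2 * b ^ 2 * c ^ 2 = 1) : Subsingleton β := by
  -- Step 1: the ℤ-abelianization gives `toAdd (zab a) + toAdd (zab b) + toAdd (zab c) = 0`.
  have hz : (zab a) ^ 2 * (zab b) ^ 2 * (zab c) ^ 2 = 1 := by
    rw [← map_pow, ← map_pow, ← map_pow, ← map_mul, ← map_mul, h, map_one]
  have hadd := congrArg Multiplicative.toAdd hz
  simp only [toAdd_mul, toAdd_pow, toAdd_one, two_smul] at hadd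
  have habcZ : Multiplicative.toAdd (zab a) + Multiplicative.toAdd (zab b)
      + Multiplicative.toAdd (zab c) = 0 := by
    ext i
    have := congrArg (fun f : β →₀ ℤ => f i) hadd
    simp only [Finsupp.add_apply, Finsupp.smul_apply, smul_eq_mul, Finsupp.coe_zero,
      Pi.zero_apply] at this ⊢
    omega
  have habc : (φ a).v + (φ b).v + (φ c).v = 0 := by
    rw [← compat' a, ← compat' b, ← compat' c, ← map_add, ← map_add, habcZ, map_zero]
  set α' := (φ a).v with hα'
  set β' := (φ b).v with hβ'
  set γ' := (φ c).v with hγ'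
  have hγ : γ' = α' + β' := by
    have h1 : -(α' + β') = α' + β' := neg_eq_iff_add_eq_zero.mpr (V_add_self _)
    rw [← h1]
    exact eq_neg_of_add_eq_zero_right habc
  -- Step 2: the quadratic relation
  have hφ : (φ a) ^ 2 * (φ b) ^ 2 * (φ c) ^ 2 = 1 := by
    rw [← map_pow, ← map_pow, ← map_pow, ← map_mul, ← map_mul, h, map_one]
  rw [ext_sq, ext_sq, ext_sq, ext_mul, ext_mul, ext_one] at hφ
  have hq : B α' α' + B β' β' + (B γ' γ') = 0 := by
    have := (Ext.mk.injEq _ _ _ _).mp hφ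
    simp only [map_zero, LinearMap.zero_apply, add_zero] at this
    exact this.2
  -- Step 3: the alternating form vanishes on α', β'
  have hA : B α' β' + B β' α' = 0 := by
    rw [hγ] at hq
    simp only [map_add, LinearMap.add_apply] at hq
    revert hq
    generalize B α' α' = w1
    generalize B α' β' = w2
    generalize B β' α' = w3
    generalize B β' β' = w4
    revert w1 w2 w3 w4
    decide
  -- Step 4: α', β' span the mod-2 abelianization
  set S : Submodule (ZMod 2) (V β) := Submodule.span (ZMod 2) {α', β'} with hS
  have hmem : ∀ x : FreeGroup β, (φ x).v ∈ S := by
    set K : Subgroup (FreeGroup β) :=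
      { carrier := {x | (φ x).v ∈ S}
        one_mem' := by
          show (φ 1).v ∈ S
          rw [map_one]
          exact S.zero_mem
        mul_mem' := by
          intro x y hx hy
          show (φ (x * y)).v ∈ S
          rw [map_mul]
          exact S.add_mem hx hy
        inv_mem' := by
          intro x hx
          show (φ x⁻¹).v ∈ S
          rw [map_inv]
          exact S.neg_mem hx } with hK
    have hle : Subgroup.closure {a, b, c} ≤ K := by
      rw [Subgroup.closure_le]
      rintro x (rfl | rfl | rfl)
      · exact Submodule.subset_span (by left; rfl)
      · exact Submodule.subset_span (by right; rfl)
      · show γ' ∈ S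
        rw [hγ]
        exact S.add_mem (Submodule.subset_span (by left; rfl))
          (Submodule.subset_span (by right; rfl))
    intro x
    exact (htop ▸ hle) (Subgroup.mem_top x)
  -- Step 5: conclude β is a subsingleton
  constructor
  intro i j
  by_contra hij
  have hei : (Finsupp.single i (1 : ZMod 2)) ∈ S := by
    have := hmem (FreeGroup.of i)
    rwa [show (φ (FreeGroup.of i)).v = Finsupp.single i 1 by rw [φ, FreeGroup.lift_apply_of]] at this
  have hej : (Finsupp.single j (1 : ZMod 2)) ∈ S := by
    have := hmem (FreeGroup.of j)
    rwa [show (φ (FreeGroup.of j)).v = Finsupp.single j 1 by rw [φ, FreeGroup.lift_apply_of]] at this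
  obtain ⟨s, t, hst⟩ := Submodule.mem_span_pair.mp hei
  obtain ⟨s', t', hst'⟩ := Submodule.mem_span_pair.mp hej
  have h0 : B (Finsupp.single i (1 : ZMod 2)) (Finsupp.single j 1)
      + B (Finsupp.single j (1 : ZMod 2)) (Finsupp.single i 1) = 0 := by
    rw [← hst, ← hst']
    clear hst hst'
    simp only [map_add, map_smul, LinearMap.add_apply, LinearMap.smul_apply, smul_eq_mul]
    revert hA
    generalize B α' α' = w1
    generalize B α' β' = w2
    generalize B β' α' = w3
    generalize B β' β' = w4
    revert s t s' t' w1 w2 w3 w4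
    decide
  rw [B_single_single, B_single_single] at h0
  rcases lt_or_gt_of_ne hij with hlt | hlt
  · rw [if_pos hlt, if_neg (asymm hlt)] at h0
    simp at h0
  · rw [if_neg (asymm hlt), if_pos hlt] at h0
    simp at h0


theorem comm_of_subsingleton {β : Type u} [Subsingleton β] (x y : FreeGroup β) :
    x * y = y * x := by
  rcases isEmpty_or_nonempty β with he | hne
  · exact Subsingleton.elim _ _
  · obtain ⟨i⟩ := hne
    have hr : Set.range (FreeGroup.of : β → FreeGroup β) = {FreeGroup.of i} := by
      ext z
      simp only [Set.mem_range, Set.mem_singleton_iff]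
      constructor
      · rintro ⟨j, rfl⟩
        rw [Subsingleton.elim j i]
      · rintro rfl
        exact ⟨i, rfl⟩
    have hmem : ∀ z : FreeGroup β, ∃ k : ℤ, (FreeGroup.of i) ^ k = z := by
      intro z
      rw [← Subgroup.mem_zpowers_iff, Subgroup.zpowers_eq_closure, ← hr,
        FreeGroup.closure_range_of]
      exact Subgroup.mem_top z
    obtain ⟨m, rfl⟩ := hmem x
    obtain ⟨n, rfl⟩ := hmem y
    rw [← zpow_add, ← zpow_add, add_comm]

end VaughtAux

open VaughtAux in
/-- Lyndon's theorem on Vaught's equation: if `a² b² c² = 1` in a free group,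
then `a`, `b`, `c` pairwise commute. -/
theorem vaught_equation_commute {α : Type} (a b c : FreeGroup α)
    (h : a ^ 2 * b ^ 2 * c ^ 2 = 1) :
    a * b = b * a ∧ b * c = c * b ∧ a * c = c * a := by
  set H : Subgroup (FreeGroup α) := Subgroup.closure {a, b, c} with hH
  have ha : a ∈ H := Subgroup.subset_closure (by left; rfl)
  have hb : b ∈ H := Subgroup.subset_closure (by right; left; rfl)
  have hc : c ∈ H := Subgroup.subset_closure (by right; right; rfl)
  set A : H := ⟨a, ha⟩
  set B : H := ⟨b, hb⟩
  set C : H := ⟨c, hc⟩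
  have hrel : A ^ 2 * B ^ 2 * C ^ 2 = 1 := by
    apply Subtype.ext
    push_cast
    exact h
  have himg : H.subtype '' {A, B, C} = {a, b, c} := by
    rw [Set.image_insert_eq, Set.image_insert_eq, Set.image_singleton]
    rfl
  have hclos : Subgroup.closure ({A, B, C} : Set H) = ⊤ := by
    apply Subgroup.map_injective H.subtype_injective
    rw [MonoidHom.map_closure, himg, ← MonoidHom.range_eq_map, Subgroup.range_subtype, hH]
  letI : LinearOrder (IsFreeGroup.Generators H) := IsWellOrder.linearOrder WellOrderingRel
  set e := IsFreeGroup.toFreeGroup H with he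
  have h' : (e A) ^ 2 * (e B) ^ 2 * (e C) ^ 2 = 1 := by
    rw [← map_pow, ← map_pow, ← map_pow, ← map_mul, ← map_mul, hrel, map_one]
  have htop' : Subgroup.closure ({e A, e B, e C} : Set (FreeGroup (IsFreeGroup.Generators H)))
      = ⊤ := by
    have : ({e A, e B, e C} : Set (FreeGroup (IsFreeGroup.Generators H)))
        = e.toMonoidHom '' {A, B, C} := by
      rw [Set.image_insert_eq, Set.image_insert_eq, Set.image_singleton]
      rfl
    rw [this, ← MonoidHom.map_closure, hclos]
    exact Subgroup.map_top_of_surjective _ e.surjective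
  haveI : Subsingleton (IsFreeGroup.Generators H) := key (e A) (e B) (e C) htop' h'
  have comm : ∀ X Y : H, X * Y = Y * X := by
    intro X Y
    apply e.injective
    rw [map_mul, map_mul, comm_of_subsingleton]
  refine ⟨?_, ?_, ?_⟩
  · exact congrArg Subtype.val (comm A B)
  · exact congrArg Subtype.val (comm B C)
  · exact congrArg Subtype.val (comm A C)
end

section
/- Let V be a finite connected graph 2-covered by embedded connected subgraphs E₁, E₂, E₃ such that there exists a vertex in im(E₁) ∩ im(E₂) ∩ im(E₃). If no vertex of V has three or more complementary directions beyond the triple point structure, then in the 'curvature' count, Σ_{w ∈ V} (1 − deg_Γ(w)/2) ≤ −1/2, where deg_Γ(w) counts the number of the Eᵢ whose image contains w; equality holds if and only if there is exactly one point of triple intersection. -/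
/-- A graph in the sense of Serre. -/
structure SerreGraph where
  V : Type
  E : Type
  bar : E → E
  t : E → V
  bar_bar : ∀ e, bar (bar e) = e
  bar_ne : ∀ e, bar e ≠ e

/-- Adjacency: there is an oriented edge from `v` to `w`. -/
def SerreGraph.Adj (G : SerreGraph) (v w : G.V) : Prop :=
  ∃ e, G.t e = w ∧ G.t (G.bar e) = v

/-- Connectedness of a graph. -/
def SerreGraph.Connected (G : SerreGraph) : Prop :=
  Nonempty G.V ∧ ∀ v w : G.V, Relation.ReflTransGen G.Adj v w

/-- A subgraph of a Serre graph. -/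
structure SerreGraph.Subgraph (G : SerreGraph) where
  verts : Set G.V
  edges : Set G.E
  bar_mem : ∀ e ∈ edges, G.bar e ∈ edges
  t_mem : ∀ e ∈ edges, G.t e ∈ verts

/-- Adjacency within a subgraph. -/
def SerreGraph.Subgraph.Adj {G : SerreGraph} (S : G.Subgraph) (v w : G.V) : Prop :=
  ∃ e ∈ S.edges, G.t e = w ∧ G.t (G.bar e) = v

/-- A subgraph is connected. -/
def SerreGraph.Subgraph.Connected {G : SerreGraph} (S : G.Subgraph) : Prop :=
  S.verts.Nonempty ∧ ∀ v ∈ S.verts, ∀ w ∈ S.verts, Relation.ReflTransGen S.Adj v w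

/-- Let `V` be a finite connected graph 2-covered by three embedded connected
subgraphs `S 0, S 1, S 2` with a point of triple intersection.  Writing
`deg_Γ(v)` for the number of indices `i` with `v ∈ im (S i)` (which is between
2 and 3), the curvature count satisfies
`Σ_v (1 - deg_Γ(v)/2) ≤ -1/2`, with equality if and only if there is exactly
one point of triple intersection. -/
theorem two_covered_curvature_bound (G : SerreGraph)
    [Fintype G.V] [Fintype G.E] (hG : G.Connected)
    (S : Fin 3 → G.Subgraph)
    (hconn : ∀ i, (S i).Connected)
    (hcover : ∀ e : G.E, Nat.card {i : Fin 3 // e ∈ (S i).edges} = 2)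
    (htriple : ∃ w : G.V, ∀ i, w ∈ (S i).verts) :
    (∑ v : G.V, (1 - (Nat.card {i : Fin 3 // v ∈ (S i).verts} : ℚ) / 2)) ≤ -(1 / 2) ∧
    ((∑ v : G.V, (1 - (Nat.card {i : Fin 3 // v ∈ (S i).verts} : ℚ) / 2)) = -(1 / 2) ↔
      Nat.card {v : G.V // ∀ i, v ∈ (S i).verts} = 1) := by
  classical
  obtain ⟨w, hw⟩ := htriple
  have hdeg3 : ∀ v : G.V, (∀ i, v ∈ (S i).verts) →
      Nat.card {i : Fin 3 // v ∈ (S i).verts} = 3 := by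
    intro v hv
    rw [Nat.card_congr (Equiv.subtypeUnivEquiv hv)]
    simp
  have hdeg2 : ∀ v : G.V, 2 ≤ Nat.card {i : Fin 3 // v ∈ (S i).verts} := by
    intro v
    by_cases hvw : v = w
    · subst hvw
      rw [hdeg3 v hw]; omega
    · rcases (hG.2 v w).cases_head with h | ⟨u, ⟨e, _, hebar⟩, _⟩
      · exact absurd h hvw
      · have hc := hcover (G.bar e)
        have hle : Nat.card {i : Fin 3 // G.bar e ∈ (S i).edges} ≤
            Nat.card {i : Fin 3 // v ∈ (S i).verts} := by
          apply Nat.card_le_card_of_injective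
            (fun x => ⟨x.1, by have := (S x.1).t_mem _ x.2; rwa [hebar] at this⟩)
          intro a b hab
          simpa [Subtype.ext_iff] using hab
        omega
  have hdegle : ∀ v : G.V, ¬ (∀ i, v ∈ (S i).verts) →
      Nat.card {i : Fin 3 // v ∈ (S i).verts} ≤ 2 := by
    intro v hv
    push_neg at hv
    obtain ⟨j, hj⟩ := hv
    have hle : Nat.card {i : Fin 3 // v ∈ (S i).verts} ≤ Nat.card {i : Fin 3 // i ≠ j} := by
      apply Nat.card_le_card_of_injective
        (fun x => ⟨x.1, fun h => hj (h ▸ x.2)⟩)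
      intro a b hab
      simpa [Subtype.ext_iff] using hab
    have h2 : Nat.card {i : Fin 3 // i ≠ j} = 2 := by
      rw [Nat.card_eq_fintype_card]
      simp [Fintype.card_subtype_compl]
    omega
  have hval : ∀ v : G.V, (1 - (Nat.card {i : Fin 3 // v ∈ (S i).verts} : ℚ) / 2)
      = if (∀ i, v ∈ (S i).verts) then -(1/2 : ℚ) else 0 := by
    intro v
    by_cases h : ∀ i, v ∈ (S i).verts
    · rw [if_pos h, hdeg3 v h]
      norm_num
    · rw [if_neg h]
      have : Nat.card {i : Fin 3 // v ∈ (S i).verts} = 2 :=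
        le_antisymm (hdegle v h) (hdeg2 v)
      rw [this]
      norm_num
  have hsum : (∑ v : G.V, (1 - (Nat.card {i : Fin 3 // v ∈ (S i).verts} : ℚ) / 2))
      = -(Nat.card {v : G.V // ∀ i, v ∈ (S i).verts} : ℚ) / 2 := by
    rw [Finset.sum_congr rfl (fun v _ => hval v), Finset.sum_ite, Finset.sum_const,
      Finset.sum_const, smul_zero, add_zero, Nat.card_eq_fintype_card, Fintype.card_subtype]
    simp [nsmul_eq_mul]
    ring
  have hn : 1 ≤ Nat.card {v : G.V // ∀ i, v ∈ (S i).verts} := by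
    have : Nonempty {v : G.V // ∀ i, v ∈ (S i).verts} := ⟨⟨w, hw⟩⟩
    exact Nat.card_pos
  have hnq : (1 : ℚ) ≤ (Nat.card {v : G.V // ∀ i, v ∈ (S i).verts} : ℚ) := by
    exact_mod_cast hn
  refine ⟨by rw [hsum]; linarith, ?_⟩
  rw [hsum]
  constructor
  · intro h
    have : (Nat.card {v : G.V // ∀ i, v ∈ (S i).verts} : ℚ) = 1 := by linarith
    exact_mod_cast this
  · intro h
    rw [h]
    norm_num
end

section
/- Baumslag's theorem on adjoining roots: let F be a free group of rank n, γ ∈ F an element that is neither a proper power nor a basis element, and k ≥ 2. If G = ⟨F, s | s^k = γ⟩ and φ: G → F' is a homomorphism to a free group that is injective on F, then the image φ(G) has rank strictly less than n + 1; equivalently, if (y₁,…,y_{n+1}) is a solution in a free group to ω(x₁,…,x_n) = x_{n+1}^k with ω not a proper power and not primitive, then ⟨y₁,…,y_{n+1}⟩ has rank at most n. -/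
/-- `x` is a basis (primitive) element of the group `F`. -/
def IsBasisElem {F : Type} [Group F] (x : F) : Prop :=
  ∃ s : Set F, x ∈ s ∧ Function.Bijective ⇑(FreeGroup.lift (Subtype.val : s → F))

/-- The group `⟨F, s | s^k = γ⟩` obtained from the free group `F` of rank `n`
by adjoining a `k`-th root of `γ`. -/
abbrev RootAdj {n : ℕ} (γ : FreeGroup (Fin n)) (k : ℕ) : Type :=
  (Monoid.Coprod (FreeGroup (Fin n)) (FreeGroup Unit)) ⧸
    Subgroup.normalClosure
      {(Monoid.Coprod.inr (FreeGroup.of ())) ^ k * (Monoid.Coprod.inl γ)⁻¹}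

/-- The natural map `F → ⟨F, s | s^k = γ⟩`. -/
def rootAdjIncl {n : ℕ} (γ : FreeGroup (Fin n)) (k : ℕ) :
    FreeGroup (Fin n) →* RootAdj γ k :=
  (QuotientGroup.mk' _).comp Monoid.Coprod.inl

/-- Exponent-sum type lemma: the image under a homomorphism to a `ℚ`-vector space
(written multiplicatively) of an element of a subgroup closure lies in the span of the
images of the generators. -/
lemma toAdd_mem_span {G M : Type*} [Group G] [AddCommGroup M] [Module ℚ M]
    (ψ : G →* Multiplicative M) (s : Set G) {g : G} (hg : g ∈ Subgroup.closure s) :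
    Multiplicative.toAdd (ψ g) ∈ Submodule.span ℚ ((fun x => Multiplicative.toAdd (ψ x)) '' s) := by
  induction hg using Subgroup.closure_induction with
  | mem x hx => exact Submodule.subset_span ⟨x, hx, rfl⟩
  | one => simpa using (Submodule.span ℚ ((fun x => Multiplicative.toAdd (ψ x)) '' s)).zero_mem
  | mul x y hx hy ihx ihy => simpa [map_mul] using add_mem ihx ihy
  | inv x hx ihx => simpa [map_inv] using neg_mem ihx

/-- Baumslag's theorem: let `F` be free of rank `n`, `γ ∈ F` neither a proper
power nor a basis element, `k ≥ 2`, and `G = ⟨F, s | s^k = γ⟩`.  If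
`φ : G → F'` is a homomorphism to a free group injective on `F`, then the
image of `φ` has rank at most `n` (strictly less than `n + 1`): it is
generated by at most `n` elements. -/
theorem baumslag (n : ℕ) (γ : FreeGroup (Fin n)) (k : ℕ) (hk : 2 ≤ k)
    (hpow : ∀ (u : FreeGroup (Fin n)) (j : ℕ), 2 ≤ j → u ^ j ≠ γ)
    (hbasis : ¬ IsBasisElem γ)
    (β : Type) (φ : RootAdj γ k →* FreeGroup β)
    (hφ : Function.Injective (φ.comp (rootAdjIncl γ k))) :
    ∃ S : Finset (FreeGroup β), S.card ≤ n ∧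
      Subgroup.closure (S : Set (FreeGroup β)) = φ.range := by
  classical
  set N : Subgroup (Monoid.Coprod (FreeGroup (Fin n)) (FreeGroup Unit)) := Subgroup.normalClosure
      {(Monoid.Coprod.inr (FreeGroup.of ())) ^ k * (Monoid.Coprod.inl γ)⁻¹} with hNdef
  set ψ : Monoid.Coprod (FreeGroup (Fin n)) (FreeGroup Unit) →* FreeGroup β :=
    φ.comp (QuotientGroup.mk' N) with hψdef
  set a : Fin n → FreeGroup β := fun i => ψ (Monoid.Coprod.inl (FreeGroup.of i)) with hadef
  set c : FreeGroup β := ψ (Monoid.Coprod.inr (FreeGroup.of ())) with hcdef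
  -- Step 1 : `c ^ k = ψ (inl γ)`
  have hck : c ^ k = ψ (Monoid.Coprod.inl γ) := by
    have h0 : (QuotientGroup.mk' N)
        ((Monoid.Coprod.inr (FreeGroup.of ())) ^ k * (Monoid.Coprod.inl γ)⁻¹) = 1 :=
      (QuotientGroup.eq_one_iff _).2
        (Subgroup.subset_normalClosure (Set.mem_singleton _))
    have h1 : ψ ((Monoid.Coprod.inr (FreeGroup.of ())) ^ k * (Monoid.Coprod.inl γ)⁻¹) = 1 := by
      rw [hψdef, MonoidHom.comp_apply, h0, map_one]
    rw [map_mul, map_pow, map_inv] at h1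
    exact mul_inv_eq_one.mp h1
  -- Step 2 : `φ.range` is generated by the `a i` and `c`
  set H : Subgroup (FreeGroup β) := Subgroup.closure (Set.range a ∪ {c}) with hHdef
  have hrange : φ.range = H := by
    have h2 : φ.range = ψ.range := by
      ext x
      constructor
      · rintro ⟨y, rfl⟩
        obtain ⟨z, rfl⟩ := QuotientGroup.mk'_surjective N y
        exact ⟨z, rfl⟩
      · rintro ⟨y, rfl⟩
        exact ⟨_, rfl⟩
    have h3 : (ψ.comp Monoid.Coprod.inl).range = Subgroup.closure (Set.range a) := by
      rw [MonoidHom.range_eq_map, ← FreeGroup.closure_range_of, MonoidHom.map_closure,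
        ← Set.range_comp]
      rfl
    have h4 : (ψ.comp Monoid.Coprod.inr).range = Subgroup.closure {c} := by
      rw [MonoidHom.range_eq_map, ← FreeGroup.closure_range_of, MonoidHom.map_closure,
        Set.range_unique, Set.image_singleton]
      rfl
    rw [h2, Monoid.Coprod.range_eq ψ, h3, h4, hHdef, Subgroup.closure_union]
  -- Step 3 : `c ^ k` lies in the subgroup generated by the `a i`
  have hckmem : c ^ k ∈ Subgroup.closure (Set.range a) := by
    rw [hck]
    have hγ : γ ∈ Subgroup.closure (Set.range (FreeGroup.of : Fin n → FreeGroup (Fin n))) := by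
      rw [FreeGroup.closure_range_of]; trivial
    have h5 := Subgroup.mem_map_of_mem (ψ.comp Monoid.Coprod.inl) hγ
    rwa [MonoidHom.map_closure, ← Set.range_comp] at h5
  -- Move everything inside the subgroup `H`
  have hAmem : ∀ i, a i ∈ H := fun i => Subgroup.subset_closure (Or.inl ⟨i, rfl⟩)
  have hCmem : c ∈ H := Subgroup.subset_closure (Or.inr rfl)
  set A : Fin n → H := fun i => ⟨a i, hAmem i⟩ with hAdef
  set C : H := ⟨c, hCmem⟩ with hCdef
  have htopH : Subgroup.closure (Set.range A ∪ {C}) = (⊤ : Subgroup H) := by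
    rw [eq_top_iff, ← Subgroup.closure_closure_coe_preimage (k := Set.range a ∪ {c})]
    apply Subgroup.closure_mono
    rintro ⟨x, hx⟩ h
    rcases h with h | h
    · obtain ⟨i, hi⟩ := h
      exact Or.inl ⟨i, Subtype.ext hi⟩
    · exact Or.inr (Subtype.ext h)
  have hsub : Subgroup.closure (Set.range a) ≤ H :=
    Subgroup.closure_mono Set.subset_union_left
  have key : ∀ x (hx : x ∈ Subgroup.closure (Set.range a)),
      (⟨x, hsub hx⟩ : H) ∈ Subgroup.closure (Set.range A) := by
    intro x hx
    induction hx using Subgroup.closure_induction with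
    | mem y hy =>
      obtain ⟨i, rfl⟩ := hy
      exact Subgroup.subset_closure ⟨i, rfl⟩
    | one => exact one_mem _
    | mul x y hx hy ihx ihy => exact mul_mem ihx ihy
    | inv x hx ihx => exact inv_mem ihx
  have hCk : C ^ k ∈ Subgroup.closure (Set.range A) := key _ hckmem
  -- The abelianized (rationalized) picture
  haveI : IsFreeGroup H := inferInstance
  set X := IsFreeGroup.Generators H with hXdef
  set rep : H ≃* FreeGroup X := IsFreeGroup.toFreeGroup H with hrepdef
  set e : FreeGroup X →* Multiplicative (X →₀ ℚ) :=
    FreeGroup.lift (fun x => Multiplicative.ofAdd (Finsupp.single x (1 : ℚ))) with hedef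
  set χ : H →* Multiplicative (X →₀ ℚ) := e.comp rep.toMonoidHom with hχdef
  set W : Submodule ℚ (X →₀ ℚ) :=
    Submodule.span ℚ (Set.range fun i => Multiplicative.toAdd (χ (A i))) with hWdef
  have hwW : Multiplicative.toAdd (χ C) ∈ W := by
    have h6 := toAdd_mem_span χ (Set.range A) hCk
    rw [← Set.range_comp] at h6
    have hrw : ((fun x => Multiplicative.toAdd (χ x)) ∘ A)
        = fun i => Multiplicative.toAdd (χ (A i)) := rfl
    rw [hrw, map_pow, toAdd_pow] at h6
    have hk0 : (k : ℚ) ≠ 0 := Nat.cast_ne_zero.2 (by omega)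
    have h7 : (k : ℚ) • Multiplicative.toAdd (χ C) ∈ W := by
      rwa [Nat.cast_smul_eq_nsmul]
    have h8 := W.smul_mem ((k : ℚ)⁻¹) h7
    rwa [inv_smul_smul₀ hk0] at h8
  have hallW : ∀ h : H, Multiplicative.toAdd (χ h) ∈ W := by
    intro h
    have hmem : h ∈ Subgroup.closure (Set.range A ∪ {C}) := by
      rw [htopH]; trivial
    have h9 := toAdd_mem_span χ _ hmem
    refine Submodule.span_le.2 ?_ h9
    rintro v ⟨x, hx, rfl⟩
    rcases hx with hx | hx
    · obtain ⟨i, rfl⟩ := hx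
      exact Submodule.subset_span ⟨i, rfl⟩
    · rw [Set.mem_singleton_iff] at hx
      rw [hx]
      exact hwW
  have hWtop : W = ⊤ := by
    rw [eq_top_iff]
    have hbs : Submodule.span ℚ (Set.range fun x : X => Finsupp.single x (1 : ℚ)) = ⊤ := by
      simpa using (Finsupp.basisSingleOne (R := ℚ) (ι := X)).span_eq
    rw [← hbs]
    refine Submodule.span_le.2 ?_
    rintro v ⟨x, rfl⟩
    show Finsupp.single x (1 : ℚ) ∈ (W : Set (X →₀ ℚ))
    have h10 : Multiplicative.toAdd (χ (rep.symm (FreeGroup.of x)))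
        = Finsupp.single x (1 : ℚ) := by
      rw [hχdef]
      simp [hedef]
    rw [← h10]
    exact hallW _
  have hrank : (Cardinal.mk X) ≤ (n : Cardinal) := by
    have h11 : Module.rank ℚ (X →₀ ℚ) = Cardinal.mk X := rank_finsupp_self' (R := ℚ) (ι := X)
    calc (Cardinal.mk X) = Module.rank ℚ (X →₀ ℚ) := h11.symm
      _ = Module.rank ℚ W := by rw [hWtop]; exact (rank_top ℚ _).symm
      _ ≤ Cardinal.mk (Set.range fun i => Multiplicative.toAdd (χ (A i))) := rank_span_le _
      _ ≤ Cardinal.mk (Fin n) := Cardinal.mk_range_le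
      _ = n := Cardinal.mk_fin n
  haveI : Finite X := by
    rw [← Cardinal.lt_aleph0_iff_finite]
    exact hrank.trans_lt (Cardinal.nat_lt_aleph0 n)
  haveI : Fintype X := Fintype.ofFinite X
  have hcard : Fintype.card X ≤ n := by
    rwa [Cardinal.mk_fintype, Nat.cast_le] at hrank
  -- Conclusion
  refine ⟨Finset.image (fun x : X => ((rep.symm (FreeGroup.of x) : H) : FreeGroup β))
    Finset.univ, ?_, ?_⟩
  · exact Finset.card_image_le.trans (by simpa using hcard)
  · rw [hrange, Finset.coe_image, Finset.coe_univ, Set.image_univ]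
    have h12 : (Set.range fun x : X => ((rep.symm (FreeGroup.of x) : H) : FreeGroup β))
        = H.subtype '' (Set.range fun x : X => rep.symm (FreeGroup.of x)) := by
      rw [← Set.range_comp]; rfl
    rw [h12, ← MonoidHom.map_closure]
    have h13 : Subgroup.closure (Set.range fun x : X => rep.symm (FreeGroup.of x))
        = (⊤ : Subgroup H) := by
      have h14 : (Set.range fun x : X => rep.symm (FreeGroup.of x))
          = rep.symm.toMonoidHom '' (Set.range (FreeGroup.of : X → FreeGroup X)) := by
        rw [← Set.range_comp]; rfl
      rw [h14, ← MonoidHom.map_closure, FreeGroup.closure_range_of,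
        Subgroup.map_top_of_surjective _ rep.symm.surjective]
    rw [h13, ← MonoidHom.range_eq_map, Subgroup.range_subtype]
end

section
/- Let L ↠ L' be an epimorphism of finitely generated groups, and let H' be a group through which the epimorphism factors (L ↠ H' ↠ L') maximizing Scott complexity. Then the Scott complexity satisfies scott(H') ≥ scott(L'), i.e., (q_{H'} − 1, p_{H'}) ≥ (q_{L'} − 1, p_{L'}) lexicographically in the first coordinate and with the stated orders; moreover if some freely indecomposable free factor of H' has trivial image in L' then the inequality is strict. -/
/-!
Taking `H'' = L'` in the maximality of `H'` gives `scott(L') ≤ scott(H')`. Suppose now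
`H' ≅ A ∗ B` with `A` freely indecomposable, nontrivial and killed by `β : H' ↠ L'`.
Then `β` factors through the map `A ∗ B ↠ A ∗ L'` that is the identity on `A` and `β` on `B`,
so `A ∗ L'` is again an intermediate quotient. Adjoining `A` to a Grushko decomposition of `L'` gives one of `A ∗ L'`
whose Scott complexity is strictly larger than that of `L'`: the free rank grows if `A ≅ ℤ`,
the number of non-free factors grows otherwise. Maximality of `H'` then forbids
`scott(L') = scott(H')`.
-/

/-- A group is freely indecomposable if in any free product decomposition one
of the factors is trivial. -/
def FreelyIndecomposable (G : Type) [Group G] : Prop :=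
  ∀ (A B : Type) (_ : Group A) (_ : Group B),
    Nonempty (G ≃* Monoid.Coprod A B) → Subsingleton A ∨ Subsingleton B

/-- `HasScott G a p` : `G` has a Grushko decomposition
`G ≅ G₁ * ⋯ * G_p * F_q` with each `Gᵢ` nontrivial, freely indecomposable and
not infinite cyclic, and with `a = q - 1`; the Scott complexity of `G` is then
the pair `(q - 1, p)`. -/
def HasScott (G : Type) [Group G] (a : ℤ) (p : ℕ) : Prop :=
  ∃ (q : ℕ) (H : Fin p → Type) (_ : ∀ i, Group (H i)),
    a = (q : ℤ) - 1 ∧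
    (∀ i, Nontrivial (H i)) ∧
    (∀ i, FreelyIndecomposable (H i)) ∧
    (∀ i, IsEmpty (H i ≃* Multiplicative ℤ)) ∧
    Nonempty (G ≃* Monoid.Coprod (Monoid.CoprodI H) (FreeGroup (Fin q)))

/-- The order on Scott complexities: lexicographic on `(q - 1, p)`. -/
def ScottLE (x y : ℤ × ℕ) : Prop :=
  x.1 < y.1 ∨ (x.1 = y.1 ∧ x.2 ≤ y.2)

/-- Strict order on Scott complexities. -/
def ScottLT (x y : ℤ × ℕ) : Prop := ScottLE x y ∧ x ≠ y

open Monoid Coprod Function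

namespace Monoid.Coprod

variable {M N M' N' P : Type*}

theorem map_surjective [Group M] [Group N] [Group M'] [Group N'] {f : M →* M'} {g : N →* N'}
    (hf : Surjective f) (hg : Surjective g) : Surjective (map f g) := fun y =>
  Coprod.induction_on (motive := fun y => ∃ x, map f g x = y) y
    (fun m => let ⟨x, hx⟩ := hf m; ⟨inl x, by simp [hx]⟩)
    (fun n => let ⟨x, hx⟩ := hg n; ⟨inr x, by simp [hx]⟩)
    (fun _ _ ⟨u, hu⟩ ⟨v, hv⟩ => ⟨u * v, by simp [hu, hv]⟩)

theorem eq_lift_one_of_comp_inl_eq_one [Monoid M] [Monoid N] [Monoid P] {f : M ∗ N →* P}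
    (h : f.comp inl = 1) : f = lift 1 (f.comp inr) :=
  hom_ext (by rw [h, lift_comp_inl]) (lift_comp_inr _ _).symm

theorem comp_inr_surjective_of_comp_inl_eq_one [Group M] [Group N] [Group P] {f : M ∗ N →* P}
    (hf : Surjective f) (h : f.comp inl = 1) : Surjective (f.comp inr) := by
  rw [← MonoidHom.range_eq_top] at hf ⊢
  rwa [range_eq, h, MonoidHom.range_one, bot_sup_eq] at hf

end Monoid.Coprod

noncomputable def FreeGroup.intCoprodMulEquiv (q : ℕ) :
    Multiplicative ℤ ∗ FreeGroup (Fin q) ≃* FreeGroup (Fin (q + 1)) :=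
  MonoidHom.toMulEquiv
    (Coprod.lift (zpowersHom _ (FreeGroup.of 0)) (FreeGroup.lift fun j => FreeGroup.of j.succ))
    (FreeGroup.lift <| Fin.cases (Coprod.inl (Multiplicative.ofAdd 1)) (Coprod.inr ∘ FreeGroup.of))
    (Coprod.hom_ext (MonoidHom.ext_mint (by simp)) (FreeGroup.ext_hom _ _ fun i => by simp))
    (FreeGroup.ext_hom _ _ fun i => by cases i using Fin.cases <;> simp)

def Fin.consFamily {b : ℕ} (A : Type) (H : Fin b → Type) : Fin (b + 1) → Type := Fin.cons A H

instance {b : ℕ} {A : Type} {H : Fin b → Type} [Group A] [∀ i, Group (H i)] (i : Fin (b + 1)) :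
    Group (Fin.consFamily A H i) :=
  Fin.cases (motive := fun i => Group (Fin.consFamily A H i)) ‹_› ‹_› i

noncomputable def Monoid.CoprodI.consMulEquiv {b : ℕ} (A : Type) (H : Fin b → Type) [Group A]
    [∀ i, Group (H i)] : A ∗ CoprodI H ≃* CoprodI (Fin.consFamily A H) :=
  MonoidHom.toMulEquiv
    (Coprod.lift (CoprodI.of (M := Fin.consFamily A H) (i := 0))
      (CoprodI.lift fun j => CoprodI.of (M := Fin.consFamily A H) (i := j.succ)))
    (CoprodI.lift fun i =>
      Fin.cases (motive := fun i => Fin.consFamily A H i →* A ∗ CoprodI H)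
        Coprod.inl (fun j => (Coprod.inr.comp (CoprodI.of (M := H) (i := j)) :
          Fin.consFamily A H j.succ →* A ∗ CoprodI H)) i)
    (Coprod.hom_ext
      (MonoidHom.ext fun x => by
        simp only [MonoidHom.comp_apply, MonoidHom.id_apply]
        exact CoprodI.lift_of (M := Fin.consFamily A H) (i := 0) _ x)
      (CoprodI.ext_hom _ _ fun j => MonoidHom.ext fun x => by
        simp only [MonoidHom.comp_apply, MonoidHom.id_apply]
        exact CoprodI.lift_of (M := Fin.consFamily A H) (i := j.succ) _ x))
    (CoprodI.ext_hom _ _ fun i => by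
      induction i using Fin.cases with
      | zero =>
        ext x
        simp only [MonoidHom.comp_apply, MonoidHom.id_apply, CoprodI.lift_of]
        exact Coprod.lift_apply_inl _ _ x
      | succ j =>
        ext x
        simp only [MonoidHom.comp_apply, MonoidHom.id_apply, CoprodI.lift_of]
        exact (Coprod.lift_apply_inr _ _ _).trans (CoprodI.lift_of (M := H) (i := j)
          (fun j => CoprodI.of (M := Fin.consFamily A H) (i := j.succ)) x))

namespace HasScott

variable {G A : Type} [Group G] [Group A] {a : ℤ} {p : ℕ}

theorem coprod_of_mulEquiv_int (eA : A ≃* Multiplicative ℤ) (h : HasScott G a p) :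
    HasScott (A ∗ G) (a + 1) p := by
  obtain ⟨q, H, _, rfl, hnt, hfi, hnz, ⟨eG⟩⟩ := h
  refine ⟨q + 1, H, _, by push_cast; ring, hnt, hfi, hnz, ⟨?_⟩⟩
  exact (MulEquiv.coprodCongr eA eG).trans <|
    (MulEquiv.coprodCongr (.refl _) (MulEquiv.coprodComm _ _)).trans <|
    (MulEquiv.coprodAssoc _ _ _).symm.trans <|
    (MulEquiv.coprodCongr (FreeGroup.intCoprodMulEquiv q) (.refl _)).trans <|
    MulEquiv.coprodComm _ _

theorem coprod_of_freelyIndecomposable [Nontrivial A] (hA : FreelyIndecomposable A)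
    (hAz : IsEmpty (A ≃* Multiplicative ℤ)) (h : HasScott G a p) :
    HasScott (A ∗ G) a (p + 1) := by
  obtain ⟨q, H, _, rfl, hnt, hfi, hnz, ⟨eG⟩⟩ := h
  refine ⟨q, Fin.consFamily A H, inferInstance, rfl,
    Fin.cases (motive := fun i => Nontrivial (Fin.consFamily A H i)) ‹_› hnt,
    Fin.cases (motive := fun i => FreelyIndecomposable (Fin.consFamily A H i)) hA hfi,
    Fin.cases (motive := fun i => IsEmpty (Fin.consFamily A H i ≃* Multiplicative ℤ)) hAz hnz,
    ⟨?_⟩⟩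
  exact (MulEquiv.coprodCongr (.refl A) eG).trans <|
    (MulEquiv.coprodAssoc A _ _).symm.trans <|
    MulEquiv.coprodCongr (CoprodI.consMulEquiv A H) (.refl _)

end HasScott

def IsIntermediateQuotient {L L' : Type} [Group L] [Group L'] (φ : L →* L') (H : Type)
    [Group H] : Prop :=
  ∃ (α : L →* H) (β : H →* L'), Surjective α ∧ Surjective β ∧ β.comp α = φ

theorem isIntermediateQuotient_coprod_of_map_inl_eq_one {L L' H A B : Type} [Group L] [Group L']
    [Group H] [Group A] [Group B] {α : L →* H} {β : H →* L'} (hα : Surjective α)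
    (hβ : Surjective β) (e : H ≃* A ∗ B) (hA : ∀ x : A, β (e.symm (inl x)) = 1) :
    IsIntermediateQuotient (β.comp α) (A ∗ L') := by
  set f : A ∗ B →* L' := β.comp e.symm.toMonoidHom
  have hf : Surjective f := hβ.comp e.symm.surjective
  have hfA : f.comp inl = 1 := MonoidHom.ext hA
  have hfactor : (lift 1 (.id L')).comp (map (.id A) (f.comp inr)) = f := by
    rw [eq_lift_one_of_comp_inl_eq_one hfA]
    exact hom_ext rfl rfl
  refine ⟨(map (.id A) (f.comp inr)).comp (e.toMonoidHom.comp α), lift 1 (.id L'),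
    (map_surjective surjective_id (comp_inr_surjective_of_comp_inl_eq_one hf hfA)).comp
      (e.surjective.comp hα),
    fun y => ⟨inr y, lift_apply_inr _ _ y⟩, ?_⟩
  rw [← MonoidHom.comp_assoc, hfactor]
  ext x
  simp [f]

theorem scott_of_maximal_intermediate_quotient_general
    (L L' H' : Type) [Group L] [Group L'] [Group H']
    (φ : L →* L') (hφ : Function.Surjective φ)
    (α : L →* H') (β : H' →* L')
    (hα : Function.Surjective α) (hβ : Function.Surjective β)
    (hcomp : β.comp α = φ)
    (hmax : ∀ (H'' : Type) (_ : Group H'') (α' : L →* H'') (β' : H'' →* L'),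
      Function.Surjective α' → Function.Surjective β' → β'.comp α' = φ →
      ∀ a b a' b', HasScott H'' a b → HasScott H' a' b' →
        ScottLE (a, b) (a', b')) :
    (∀ a b a' b', HasScott L' a b → HasScott H' a' b' →
      ScottLE (a, b) (a', b')) ∧
    ((∃ (A B : Type) (_ : Group A) (_ : Group B)
        (e : H' ≃* Monoid.Coprod A B),
        Nontrivial A ∧ FreelyIndecomposable A ∧
        (∀ x : A, β (e.symm (Monoid.Coprod.inl x)) = 1)) →
      ∀ a b a' b', HasScott L' a b → HasScott H' a' b' →
        ScottLT (a, b) (a', b')) := by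
  have hmax' (H'' : Type) [Group H''] (hH'' : IsIntermediateQuotient φ H'') :
      ∀ a b a' b', HasScott H'' a b → HasScott H' a' b' → ScottLE (a, b) (a', b') :=
    let ⟨α', β', hα', hβ', hcomp'⟩ := hH''
    hmax H'' _ α' β' hα' hβ' hcomp'
  have hL' := hmax' L' ⟨φ, .id L', hφ, surjective_id, φ.id_comp⟩
  refine ⟨hL', ?_⟩
  rintro ⟨A, B, _, _, e, hAnt, hAfi, hkill⟩ a b a' b' hL hH
  refine ⟨hL' a b a' b' hL hH, fun heq => ?_⟩
  obtain ⟨rfl, rfl⟩ := Prod.mk.inj heq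
  have hAL' := hcomp ▸ isIntermediateQuotient_coprod_of_map_inl_eq_one hα hβ e hkill
  rcases isEmpty_or_nonempty (A ≃* Multiplicative ℤ) with hAz | ⟨⟨eA⟩⟩
  · have := hmax' _ hAL' _ _ _ _ (hL.coprod_of_freelyIndecomposable hAfi hAz) hH
    unfold ScottLE at this
    omega
  · have := hmax' _ hAL' _ _ _ _ (hL.coprod_of_mulEquiv_int eA) hH
    unfold ScottLE at this
    omega

/-- Let `φ : L ↠ L'` be an epimorphism of finitely generated groups and let
`H'` be an intermediate quotient (`L ↠ H' ↠ L'`) of maximal Scott complexity.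
Then `scott(H') ≥ scott(L')`, and if some nontrivial freely indecomposable
free factor of `H'` has trivial image in `L'` then the inequality is strict. -/
theorem scott_of_maximal_intermediate_quotient
    (L L' H' : Type) [Group L] [Group L'] [Group H']
    [Group.FG L] [Group.FG L'] [Group.FG H']
    (φ : L →* L') (hφ : Function.Surjective φ)
    (α : L →* H') (β : H' →* L')
    (hα : Function.Surjective α) (hβ : Function.Surjective β)
    (hcomp : β.comp α = φ)
    (hmax : ∀ (H'' : Type) (_ : Group H'') (α' : L →* H'') (β' : H'' →* L'),
      Function.Surjective α' → Function.Surjective β' → β'.comp α' = φ →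
      ∀ a b a' b', HasScott H'' a b → HasScott H' a' b' →
        ScottLE (a, b) (a', b')) :
    (∀ a b a' b', HasScott L' a b → HasScott H' a' b' →
      ScottLE (a, b) (a', b')) ∧
    ((∃ (A B : Type) (_ : Group A) (_ : Group B)
        (e : H' ≃* Monoid.Coprod A B),
        Nontrivial A ∧ FreelyIndecomposable A ∧
        (∀ x : A, β (e.symm (Monoid.Coprod.inl x)) = 1)) →
      ∀ a b a' b', HasScott L' a b → HasScott H' a' b' →
        ScottLT (a, b) (a', b')) :=
  scott_of_maximal_intermediate_quotient_general L L' H' φ hφ α β hα hβ hcomp hmax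
end

section
/- For a 2-covered graph of spaces X (a finite graph of graphs where each vertex graph is 2-covered by its incident edge graphs via immersions), the Euler characteristic of the horizontal subgraph is at most that of the underlying graph: χ(Γ(X)) ≤ χ(Γ_U(X)). -/
/-- A combinatorial map of graphs. -/
structure GraphMap (G H : SerreGraph) where
  vmap : G.V → H.V
  emap : G.E → H.E
  bar_comm : ∀ e, emap (G.bar e) = H.bar (emap e)
  t_comm : ∀ e, vmap (G.t e) = H.t (emap e)

/-- An immersion: a combinatorial map injective on the link of every vertex. -/
def GraphMap.IsImmersion {G H : SerreGraph} (φ : GraphMap G H) : Prop :=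
  ∀ v : G.V, Set.InjOn φ.emap {e : G.E | G.t e = v}

def SerreGraph.levels (H : SerreGraph) (r : H.V) : ℕ → H.V → Prop
  | 0 => fun u => u = r
  | (n+1) => fun u => H.levels r n u ∨ ∃ w, H.levels r n w ∧ H.Adj w u

lemma SerreGraph.exists_height (H : SerreGraph) (hc : H.Connected) :
    ∃ (r : H.V) (h : H.V → ℕ), ∀ u, u ≠ r →
      ∃ f, H.t f = u ∧ h (H.t (H.bar f)) < h u := by
  classical
  obtain ⟨⟨r⟩, hreach⟩ := hc
  have hex : ∀ u, ∃ n, H.levels r n u := by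
    intro u
    induction hreach r u with
    | refl => exact ⟨0, rfl⟩
    | tail hab hbc ih =>
        obtain ⟨n, hn⟩ := ih
        exact ⟨n + 1, Or.inr ⟨_, hn, hbc⟩⟩
  refine ⟨r, fun u => Nat.find (hex u), ?_⟩
  intro u hu
  have hfind := Nat.find_spec (hex u)
  cases hn : Nat.find (hex u) with
  | zero =>
      rw [hn] at hfind
      exact absurd hfind hu
  | succ k =>
      rw [hn] at hfind
      rcases hfind with h1 | ⟨w, hw, f, hf1, hf2⟩
      · exact absurd h1 (Nat.find_min (hex u) (by rw [hn]; exact k.lt_succ_self))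
      · refine ⟨f, hf1, ?_⟩
        show Nat.find (hex (H.t (H.bar f))) < Nat.find (hex u)
        rw [hf2, hn]
        exact Nat.lt_succ_of_le (Nat.find_le hw)


def Emap (Γ : SerreGraph) (Vg : Γ.V → SerreGraph) (Eg : Γ.E → SerreGraph)
    (τ : (e : Γ.E) → GraphMap (Eg e) (Vg (Γ.t e))) :
    (Σ e : Γ.E, (Eg e).E) → Σ w : Γ.V, (Vg w).E :=
  fun p => ⟨Γ.t p.1, (τ p.1).emap p.2⟩

lemma key_count (Γ : SerreGraph) [Fintype Γ.V] [Fintype Γ.E]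
    (Vg : Γ.V → SerreGraph) (Eg : Γ.E → SerreGraph)
    [∀ v, Fintype (Vg v).V] [∀ e, Fintype (Eg e).V]
    (hVconn : ∀ v, (Vg v).Connected) (hEne : ∀ e, Nonempty (Eg e).V)
    (τ : (e : Γ.E) → GraphMap (Eg e) (Vg (Γ.t e)))
    (himm : ∀ e, (τ e).IsImmersion)
    (hcover : ∀ q : Σ w : Γ.V, (Vg w).E,
      Nat.card {p : Σ e : Γ.E, (Eg e).E // Emap Γ Vg Eg τ p = q} = 2) :
    2 * (∑ v : Γ.V, Fintype.card (Vg v).V) + Fintype.card Γ.E ≤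
      (∑ e : Γ.E, Fintype.card (Eg e).V) + 2 * Fintype.card Γ.V := by
  classical
  -- spanning-tree data for each vertex graph
  choose r hgt hpar using fun v => (Vg v).exists_height (hVconn v)
  choose par hpart hparh using hpar
  -- basepoints of edge graphs: a vertex which is not the child-end of a lifted parent edge
  have hbp0 : ∀ e : Γ.E, ∃ w0 : (Eg e).V, ∀ g : (Eg e).E, (Eg e).t g = w0 →
      ∀ hx : (τ e).vmap w0 ≠ r (Γ.t e),
        (τ e).emap g ≠ par (Γ.t e) ((τ e).vmap w0) hx := by
    intro e
    haveI := hEne e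
    obtain ⟨w0, -, hmin⟩ := Finset.exists_min_image Finset.univ
      (fun w : (Eg e).V => hgt (Γ.t e) ((τ e).vmap w)) Finset.univ_nonempty
    refine ⟨w0, ?_⟩
    intro g hg hx hcontr
    have h1 : (τ e).vmap ((Eg e).t ((Eg e).bar g))
        = (Vg (Γ.t e)).t ((Vg (Γ.t e)).bar ((τ e).emap g)) := by
      rw [(τ e).t_comm, (τ e).bar_comm]
    rw [hcontr] at h1
    have h2 := hparh (Γ.t e) ((τ e).vmap w0) hx
    have h3 := hmin ((Eg e).t ((Eg e).bar g)) (Finset.mem_univ _)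
    rw [h1] at h3
    omega
  choose bp hbp using hbp0
  -- two distinct lifts of each parent edge
  have hpair : ∀ x : {x : Σ w : Γ.V, (Vg w).V // x.2 ≠ r x.1},
      ∃ p q : {p : Σ e : Γ.E, (Eg e).E //
        Emap Γ Vg Eg τ p = ⟨x.1.1, par x.1.1 x.1.2 x.2⟩}, p ≠ q := by
    intro x
    have h2 := hcover ⟨x.1.1, par x.1.1 x.1.2 x.2⟩
    obtain ⟨p, q, hpq, -⟩ := Nat.card_eq_two_iff.mp h2
    exact ⟨p, q, hpq⟩
  choose σ1 σ2 hσ using hpair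
  -- the child end of a lifted parent edge is never the basepoint
  have hne : ∀ (x : {x : Σ w : Γ.V, (Vg w).V // x.2 ≠ r x.1})
      (p : {p : Σ e : Γ.E, (Eg e).E //
        Emap Γ Vg Eg τ p = ⟨x.1.1, par x.1.1 x.1.2 x.2⟩}),
      (Eg p.1.1).t p.1.2 ≠ bp p.1.1 := by
    rintro ⟨⟨v0, u0⟩, hx⟩ ⟨⟨e, g⟩, hp⟩
    simp only [Emap, Sigma.mk.inj_iff] at hp
    obtain ⟨h1, h2⟩ := hp
    subst h1
    have h2' := eq_of_heq h2
    intro hcon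
    dsimp only at hcon
    have hu : u0 = (τ e).vmap (bp e) := by
      rw [← hcon, (τ e).t_comm, h2', hpart]
    subst hu
    exact hbp e g hcon hx h2'
  -- if two lifted parent edges have the same child end, they coincide
  have hstep : ∀ (x y : {x : Σ w : Γ.V, (Vg w).V // x.2 ≠ r x.1})
      (p : {p : Σ e : Γ.E, (Eg e).E // Emap Γ Vg Eg τ p = ⟨x.1.1, par x.1.1 x.1.2 x.2⟩})
      (q : {p : Σ e : Γ.E, (Eg e).E // Emap Γ Vg Eg τ p = ⟨y.1.1, par y.1.1 y.1.2 y.2⟩}),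
      (⟨p.1.1, (Eg p.1.1).t p.1.2⟩ : Σ e : Γ.E, (Eg e).V)
        = ⟨q.1.1, (Eg q.1.1).t q.1.2⟩ →
      x = y ∧ p.1 = q.1 := by
    rintro ⟨⟨v0, u0⟩, hx⟩ ⟨⟨v1, u1⟩, hy⟩ ⟨⟨e, g⟩, hp⟩ ⟨⟨e1, g1⟩, hq⟩ h
    dsimp only at h
    rw [Sigma.mk.inj_iff] at h
    obtain ⟨he, hg⟩ := h
    subst he
    have hg' := eq_of_heq hg
    simp only [Emap, Sigma.mk.inj_iff] at hp hq
    obtain ⟨h1, h2⟩ := hp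
    subst h1
    have h2' := eq_of_heq h2
    obtain ⟨h3, h4⟩ := hq
    subst h3
    have h4' := eq_of_heq h4
    have hu0 : (τ e).vmap ((Eg e).t g) = u0 := by rw [(τ e).t_comm, h2', hpart]
    have hu1 : (τ e).vmap ((Eg e).t g) = u1 := by rw [hg', (τ e).t_comm, h4', hpart]
    have huu : u0 = u1 := by rw [← hu0, ← hu1]
    subst huu
    have hgg : g = g1 := by
      refine himm e ((Eg e).t g) rfl hg'.symm ?_
      rw [h2', h4']
    subst hgg
    exact ⟨Subtype.ext rfl, rfl⟩
  -- the injection from two copies of the non-root vertices into non-basepoint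
  -- vertices of the edge graphs
  have hinj : Function.Injective
      (fun z : {x : Σ w : Γ.V, (Vg w).V // x.2 ≠ r x.1} × Bool =>
        (⟨(cond z.2 (σ1 z.1) (σ2 z.1)).1.1,
          ⟨(Eg (cond z.2 (σ1 z.1) (σ2 z.1)).1.1).t (cond z.2 (σ1 z.1) (σ2 z.1)).1.2,
            hne z.1 (cond z.2 (σ1 z.1) (σ2 z.1))⟩⟩ :
          Σ e : Γ.E, {w : (Eg e).V // w ≠ bp e})) := by
    rintro ⟨x, i⟩ ⟨y, j⟩ h
    have h' : (⟨(cond i (σ1 x) (σ2 x)).1.1,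
          (Eg (cond i (σ1 x) (σ2 x)).1.1).t (cond i (σ1 x) (σ2 x)).1.2⟩ :
            Σ e : Γ.E, (Eg e).V)
        = ⟨(cond j (σ1 y) (σ2 y)).1.1,
            (Eg (cond j (σ1 y) (σ2 y)).1.1).t (cond j (σ1 y) (σ2 y)).1.2⟩ :=
      congrArg (fun b : Σ e : Γ.E, {w : (Eg e).V // w ≠ bp e} =>
        (⟨b.1, b.2.1⟩ : Σ e : Γ.E, (Eg e).V)) h
    obtain ⟨hxy, hpq⟩ := hstep x y _ _ h'
    subst hxy
    have hcc : cond i (σ1 x) (σ2 x) = cond j (σ1 x) (σ2 x) := Subtype.ext hpq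
    cases i <;> cases j
    · rfl
    · exact absurd hcc.symm (hσ x)
    · exact absurd hcc (hσ x)
    · rfl
  have hcard := Nat.card_le_card_of_injective _ hinj
  rw [Nat.card_eq_fintype_card, Nat.card_eq_fintype_card, Fintype.card_prod,
    Fintype.card_bool] at hcard
  -- counting the domain
  have h1 : Fintype.card {x : Σ w : Γ.V, (Vg w).V // x.2 = r x.1}
      = Fintype.card Γ.V := by
    refine Fintype.card_of_bijective
      (f := fun x : {x : Σ w : Γ.V, (Vg w).V // x.2 = r x.1} => x.1.1) ⟨?_, ?_⟩
    · rintro ⟨⟨v, u⟩, h⟩ ⟨⟨v', u'⟩, h'⟩ hvv'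
      dsimp only at h h' hvv'
      subst hvv'
      subst h
      subst h'
      rfl
    · intro v
      exact ⟨⟨⟨v, r v⟩, rfl⟩, rfl⟩
  have h2 : Fintype.card {x : Σ w : Γ.V, (Vg w).V // x.2 ≠ r x.1}
      = Fintype.card (Σ w : Γ.V, (Vg w).V)
        - Fintype.card {x : Σ w : Γ.V, (Vg w).V // x.2 = r x.1} :=
    Fintype.card_subtype_compl _
  have h3 : Fintype.card (Σ w : Γ.V, (Vg w).V) = ∑ v : Γ.V, Fintype.card (Vg v).V :=
    Fintype.card_sigma
  have h4 : Fintype.card {x : Σ w : Γ.V, (Vg w).V // x.2 = r x.1}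
      ≤ Fintype.card (Σ w : Γ.V, (Vg w).V) := Fintype.card_subtype_le _
  -- counting the codomain
  have hBe : ∀ e : Γ.E,
      Fintype.card {w : (Eg e).V // w ≠ bp e} + 1 = Fintype.card (Eg e).V := by
    intro e
    have k1 : Fintype.card {w : (Eg e).V // w = bp e} = 1 := Fintype.card_subtype_eq _
    have k2 : Fintype.card {w : (Eg e).V // w ≠ bp e}
        = Fintype.card (Eg e).V - Fintype.card {w : (Eg e).V // w = bp e} :=
      Fintype.card_subtype_compl _
    haveI := hEne e
    have k3 : 1 ≤ Fintype.card (Eg e).V := Fintype.card_pos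
    omega
  have hB : Fintype.card (Σ e : Γ.E, {w : (Eg e).V // w ≠ bp e}) + Fintype.card Γ.E
      = ∑ e : Γ.E, Fintype.card (Eg e).V := by
    have k1 : ∑ e : Γ.E, (Fintype.card {w : (Eg e).V // w ≠ bp e} + 1)
        = ∑ e : Γ.E, Fintype.card (Eg e).V :=
      Finset.sum_congr rfl (fun e _ => hBe e)
    rw [Finset.sum_add_distrib, Finset.sum_const, smul_eq_mul, mul_one,
      Finset.card_univ] at k1
    rw [Fintype.card_sigma]
    exact k1
  omega

/-- For a `2`-covered graph of spaces `X` — a finite underlying graph `Γ` with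
a finite connected vertex graph `Vg v` for each vertex, a finite connected
edge graph `Eg e` for each oriented edge (with `Eg (bar e) = Eg e`) immersing
into the terminal vertex graph, such that every edge of every vertex graph is
covered exactly twice by the incident edge graphs — the Euler characteristic
of the horizontal subgraph is at most that of the underlying graph:
`χ(Γ(X)) ≤ χ(Γ_U(X))`.  (Here `χ(Γ(X)) = Σ_v |Vg v| − (1/2) Σ_e |Eg e|` and
`χ(Γ_U(X)) = |V| − |E|/2`, edges of Serre graphs being oriented.) -/
theorem chi_horizontal_le_chi_underlying
    (Γ : SerreGraph) [Fintype Γ.V] [Fintype Γ.E]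
    (Vg : Γ.V → SerreGraph) (Eg : Γ.E → SerreGraph)
    [∀ v, Fintype (Vg v).V] [∀ e, Fintype (Eg e).V]
    (hVconn : ∀ v, (Vg v).Connected) (hEconn : ∀ e, (Eg e).Connected)
    (hsymm : ∀ e, Eg (Γ.bar e) = Eg e)
    (τ : (e : Γ.E) → GraphMap (Eg e) (Vg (Γ.t e)))
    (himm : ∀ e, (τ e).IsImmersion)
    (hcover : ∀ (v : Γ.V) (f : (Vg v).E),
      Nat.card {p : Σ e : Γ.E, (Eg e).E //
        (⟨Γ.t p.1, (τ p.1).emap p.2⟩ : Σ w : Γ.V, (Vg w).E) = ⟨v, f⟩} = 2) :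
    (∑ v : Γ.V, (Fintype.card (Vg v).V : ℚ)) -
        (∑ e : Γ.E, (Fintype.card (Eg e).V : ℚ)) / 2 ≤
      (Fintype.card Γ.V : ℚ) - (Fintype.card Γ.E : ℚ) / 2 := by
  classical
  have hEne : ∀ e, Nonempty (Eg e).V := fun e => (hEconn e).1
  have hcover' : ∀ q : Σ w : Γ.V, (Vg w).E,
      Nat.card {p : Σ e : Γ.E, (Eg e).E // Emap Γ Vg Eg τ p = q} = 2 :=
    fun q => hcover q.1 q.2
  have hkey := key_count Γ Vg Eg hVconn hEne τ himm hcover'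
  have hq : ((2 * (∑ v : Γ.V, Fintype.card (Vg v).V) + Fintype.card Γ.E : ℕ) : ℚ)
      ≤ (((∑ e : Γ.E, Fintype.card (Eg e).V) + 2 * Fintype.card Γ.V : ℕ) : ℚ) :=
    Nat.cast_le.mpr hkey
  push_cast at hq
  linarith
end
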